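/- arXiv:2508.10357 — 5 statements merged into one kernel-verified Lean document; each statement's English description precedes it below -/
import Mathlib

section
/- Under the fused-data integral-equation setup, any bounded measurable solution h : ℝ → ℝ (vanishing on (−∞,0)) of the canonical-gradient integral equation π h(t) + B(t) − γ − 1{t > t*} + μ = 0 for all t ≥ 0 satisfies h(t) = (γ + 1 − μ)/π for every t > max(c_u, t*); in particular, h is constant on the interval (max(c_u, t*), ∞) beyond the inspection window and beyond t*. -/
open MeasureTheory

/-- Under the fused-data integral-equation setup, any bounded measurable
solution `h : ℝ → ℝ` (vanishing on `(−∞,0)`) of the canonical-gradient integral equation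
`π h(t) + B(t) − γ − 1{t > t*} + μ = 0` for all `t ≥ 0` satisfies
`h(t) = (γ + 1 − μ)/π` for every `t > max(c_u, t*)`; i.e. `h` is constant beyond the
inspection window and beyond `t*`. -/
theorem stmt_4
    (tstar pi : ℝ) (htstar : 0 < tstar) (hpi : pi ∈ Set.Ioo (0 : ℝ) 1)
    (f : ℝ → ℝ) (hf_meas : Measurable f) (hf_nonneg : ∀ x, 0 ≤ f x)
    (hf_zero : ∀ x < (0 : ℝ), f x = 0)
    (hf_int : (∫ t in Set.Ioi (0 : ℝ), f t) = 1)
    (F : ℝ → ℝ) (hF : ∀ t, F t = ∫ u in (0 : ℝ)..t, f u)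
    (μ : ℝ) (hμ : μ = 1 - F tstar)
    (cl cu : ℝ) (hcl : 0 < cl) (hclcu : cl ≤ cu)
    (g : ℝ → ℝ) (hg_meas : Measurable g) (hg_nonneg : ∀ x, 0 ≤ g x)
    (hg_zero : ∀ c, c ∉ Set.Icc cl cu → g c = 0)
    (ζ : ℝ) (hζ : 0 < ζ)
    (hFbound : ∀ c ∈ Set.Icc cl cu, ζ ≤ F c ∧ F c ≤ 1 - ζ)
    (h : ℝ → ℝ) (hh_meas : Measurable h) (hh_bdd : ∃ M, ∀ x, |h x| ≤ M)
    (hh_zero : ∀ x < (0 : ℝ), h x = 0)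
    (H : ℝ → ℝ) (hH : ∀ c, H c = ∫ u in (0 : ℝ)..c, h u * f u)
    (B : ℝ → ℝ)
    (hB : ∀ t, B t = (1 - pi) * ∫ c in Set.Ioi t, H c * g c / (F c * (1 - F c)))
    (γ : ℝ) (hγ : γ = ∫ t in Set.Ioi (0 : ℝ), B t * f t)
    (heq : ∀ t, 0 ≤ t →
      pi * h t + B t - γ - (if tstar < t then (1 : ℝ) else 0) + μ = 0) :
    ∀ t, max cu tstar < t → h t = (γ + 1 - μ) / pi := by
  intro t ht
  have hcu : cu < t := lt_of_le_of_lt (le_max_left _ _) ht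
  have hts : tstar < t := lt_of_le_of_lt (le_max_right _ _) ht
  have ht0 : (0:ℝ) ≤ t := le_of_lt (lt_of_lt_of_le htstar hts.le)
  have hB0 : B t = 0 := by
    rw [hB]
    have hz : Set.EqOn (fun c => H c * g c / (F c * (1 - F c))) (fun _ => (0:ℝ)) (Set.Ioi t) := by
      intro c hc
      have : g c = 0 := hg_zero c (fun hmem => absurd hmem.2 (not_le.mpr (lt_of_lt_of_le hcu (le_of_lt hc))))
      simp [this]
    rw [MeasureTheory.setIntegral_congr_fun measurableSet_Ioi hz]
    simp
  have := heq t ht0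
  rw [hB0, if_pos hts] at this
  have hpi0 : pi ≠ 0 := ne_of_gt hpi.1
  field_simp
  linarith
end

section
/- Let f, h : ℝ → ℝ be continuous functions, let b > 0, and suppose S(c) := 1 − ∫_0^c f(u)du > 0 for all c ∈ [0, b]. Set H(c) = ∫_0^c h(u)f(u)du. Then for every c ∈ [0, b]: H(c)/S(c) = ∫_0^c (h(u) + H(u)/S(u)) · (f(u)/S(u)) du. (This is the relation Θ*(c) = H*(c)/S(c) where Θ*(c) = ∫_0^c η*(u)λ(u)du with hazard λ = f/S and η* = h* + H*/S, from the paper's lemma relating the two canonical-gradient integral equations.) -/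
open MeasureTheory Set

/- Since `H' = h f` and `S' = -f`, the quotient rule gives
`(H / S)' = (h f S + H f) / S² = (h + H / S) (f / S)`, so the identity is the fundamental
theorem of calculus for `H / S`, which vanishes at `0`. -/

lemma hasDerivAt_div_of_hasDerivAt_mul_of_hasDerivAt_neg {H S : ℝ → ℝ} {h f u : ℝ}
    (hH : HasDerivAt H (h * f) u) (hS : HasDerivAt S (-f) u) (hSu : S u ≠ 0) :
    HasDerivAt (fun x => H x / S x) ((h + H u / S u) * (f / S u)) u := by
  refine (hH.div hS hSu).congr_deriv ?_
  field_simp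
  ring

lemma integral_add_div_mul_div_eq_sub {f h S H : ℝ → ℝ} {a c : ℝ}
    (hf : Continuous f) (hh : Continuous h)
    (hS : ∀ x, HasDerivAt S (-f x) x) (hH : ∀ x, HasDerivAt H (h x * f x) x)
    (hS_ne : ∀ x ∈ uIcc a c, S x ≠ 0) :
    ∫ u in a..c, (h u + H u / S u) * (f u / S u) = H c / S c - H a / S a := by
  have hS_cont : Continuous S := continuous_iff_continuousAt.2 fun x => (hS x).continuousAt
  have hH_cont : Continuous H := continuous_iff_continuousAt.2 fun x => (hH x).continuousAt
  refine intervalIntegral.integral_eq_sub_of_hasDerivAt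
    (fun u hu => hasDerivAt_div_of_hasDerivAt_mul_of_hasDerivAt_neg (hH u) (hS u) (hS_ne u hu))
    (ContinuousOn.intervalIntegrable ?_)
  exact (hh.continuousOn.add (hH_cont.continuousOn.div hS_cont.continuousOn hS_ne)).mul
    (hf.continuousOn.div hS_cont.continuousOn hS_ne)

theorem stmt_6_general
    (f h : ℝ → ℝ) (hf : Continuous f) (hh : Continuous h)
    (b : ℝ)
    (S : ℝ → ℝ) (hS : ∀ c, S c = 1 - ∫ u in (0 : ℝ)..c, f u)
    (hSpos : ∀ c ∈ Set.Icc (0 : ℝ) b, 0 < S c)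
    (H : ℝ → ℝ) (hH : ∀ c, H c = ∫ u in (0 : ℝ)..c, h u * f u) :
    ∀ c ∈ Set.Icc (0 : ℝ) b,
      H c / S c = ∫ u in (0 : ℝ)..c, (h u + H u / S u) * (f u / S u) := by
  rintro c ⟨hc0, hcb⟩
  have hS_deriv : ∀ x, HasDerivAt S (-f x) x := fun x => by
    rw [funext hS, ← zero_sub]
    exact (hasDerivAt_const x 1).sub (hf.integral_hasStrictDerivAt 0 x).hasDerivAt
  have hH_deriv : ∀ x, HasDerivAt H (h x * f x) x := fun x => by
    rw [funext hH]
    exact ((hh.mul hf).integral_hasStrictDerivAt 0 x).hasDerivAt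
  have hS_ne : ∀ x ∈ uIcc 0 c, S x ≠ 0 := fun x hx =>
    (hSpos x (Icc_subset_Icc le_rfl hcb (uIcc_of_le hc0 ▸ hx))).ne'
  rw [integral_add_div_mul_div_eq_sub hf hh hS_deriv hH_deriv hS_ne, hH 0]
  simp

/-- For continuous `f, h : ℝ → ℝ`, `b > 0`, with `S(c) = 1 − ∫_0^c f > 0` on
`[0,b]` and `H(c) = ∫_0^c h f`, for every `c ∈ [0,b]`:
`H(c)/S(c) = ∫_0^c (h(u) + H(u)/S(u)) · (f(u)/S(u)) du`. -/
theorem stmt_6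
    (f h : ℝ → ℝ) (hf : Continuous f) (hh : Continuous h)
    (b : ℝ) (hb : 0 < b)
    (S : ℝ → ℝ) (hS : ∀ c, S c = 1 - ∫ u in (0 : ℝ)..c, f u)
    (hSpos : ∀ c ∈ Set.Icc (0 : ℝ) b, 0 < S c)
    (H : ℝ → ℝ) (hH : ∀ c, H c = ∫ u in (0 : ℝ)..c, h u * f u) :
    ∀ c ∈ Set.Icc (0 : ℝ) b,
      H c / S c = ∫ u in (0 : ℝ)..c, (h u + H u / S u) * (f u / S u) :=
  stmt_6_general f h hf hh b S hS hSpos H hH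
end

section
/- Let λ_R, λ̂_R : ℝ → ℝ be continuous, set Γ(t) = exp(−∫_0^t λ_R(u)du) and Γ̂(t) = exp(−∫_0^t λ̂_R(u)du); let f : ℝ → ℝ be nonnegative, integrable, and vanishing on (−∞,0); let ĥ : ℝ → ℝ be bounded and measurable; and assume u ↦ (Γ(u)/Γ̂(u))·|λ_R(u) − λ̂_R(u)|·(∫_u^∞ f(t)dt) is integrable on (0, ∞). Then: ∫_0^∞ (Γ(t)/Γ̂(t) − 1) · ĥ(t) · f(t) dt = −∫_0^∞ (Γ(u)/Γ̂(u)) · (λ_R(u) − λ̂_R(u)) · (∫_u^∞ ĥ(t) f(t) dt) du. -/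
open MeasureTheory Set

/-!
Write `ρ = Γ / Γ̂ = exp (∫₀ᵗ (λ̂_R - λ_R))`. Then `ρ' = (λ̂_R - λ_R) ρ` and `ρ(0) = 1`, so
`ρ(t) - 1 = ∫₀ᵗ (λ̂_R - λ_R) ρ`, and the identity is Fubini's theorem on the triangle
`0 < u ≤ t`, which the integrability hypothesis (with `|ĥ| ≤ M`) dominates.
-/

section Triangle

variable (a : ℝ) (ψ k : ℝ → ℝ)

noncomputable def triangleKernel (p : ℝ × ℝ) : ℝ :=
  {p : ℝ × ℝ | a < p.2 ∧ p.2 ≤ p.1}.indicator (fun p => ψ p.2 * k p.1) p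

theorem abs_triangleKernel (p : ℝ × ℝ) :
    |triangleKernel a ψ k p| = triangleKernel a (fun u => |ψ u|) (fun t => |k t|) p := by
  simp only [triangleKernel, indicator_apply]
  split_ifs <;> simp [abs_mul]

theorem triangleKernel_eq_indicator_Ioc (t u : ℝ) :
    triangleKernel a ψ k (t, u) = (Ioc a t).indicator ψ u * k t := by
  simp only [triangleKernel, indicator_apply, mem_ofPred_eq, mem_Ioc]
  split_ifs <;> simp

theorem triangleKernel_eq_indicator_Ici (t u : ℝ) :
    triangleKernel a ψ k (t, u) = (Ioi a).indicator ψ u * (Ici u).indicator k t := by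
  simp only [triangleKernel, indicator_apply, mem_ofPred_eq, mem_Ioi, mem_Ici]
  split_ifs <;> simp_all

theorem integral_triangleKernel_snd (t : ℝ) :
    ∫ u, triangleKernel a ψ k (t, u) =
      (Ioi a).indicator (fun t => (∫ u in a..t, ψ u) * k t) t := by
  simp only [triangleKernel_eq_indicator_Ioc]
  rw [integral_mul_const, integral_indicator measurableSet_Ioc, indicator_apply]
  split_ifs with ht
  · rw [intervalIntegral.integral_of_le (le_of_lt ht)]
  · simp [Ioc_eq_empty (notMem_Ioi.1 ht).not_gt]

theorem integral_triangleKernel_fst (u : ℝ) :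
    ∫ t, triangleKernel a ψ k (t, u) =
      (Ioi a).indicator (fun u => ψ u * ∫ t in Ioi u, k t) u := by
  simp only [triangleKernel_eq_indicator_Ici]
  rw [integral_const_mul, integral_indicator measurableSet_Ici,
    integral_Ici_eq_integral_Ioi, indicator_mul_left]

variable {ψ k}

theorem aestronglyMeasurable_triangleKernel (hψ : AEStronglyMeasurable ψ) (hk : AEStronglyMeasurable k) :
    AEStronglyMeasurable (triangleKernel a ψ k) (volume.prod volume) :=
  (hψ.comp_snd.mul hk.comp_fst).indicator
    ((measurableSet_lt measurable_const measurable_snd).inter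
      (measurableSet_le measurable_snd measurable_fst))

theorem integrable_triangleKernel (hψ : AEStronglyMeasurable ψ) (hk : Integrable k)
    (hdom : IntegrableOn (fun u => |ψ u| * ∫ t in Ioi u, |k t|) (Ioi a)) :
    Integrable (triangleKernel a ψ k) (volume.prod volume) := by
  refine (integrable_prod_iff' (aestronglyMeasurable_triangleKernel a hψ hk.1)).2
    ⟨Filter.Eventually.of_forall fun u => ?_, ?_⟩
  · simp only [triangleKernel_eq_indicator_Ici]
    exact (hk.indicator measurableSet_Ici).const_mul _
  · simp_rw [Real.norm_eq_abs, abs_triangleKernel, integral_triangleKernel_fst]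
    exact hdom.integrable_indicator measurableSet_Ioi

theorem setIntegral_Ioi_intervalIntegral_mul (hψ : AEStronglyMeasurable ψ) (hk : Integrable k)
    (hdom : IntegrableOn (fun u => |ψ u| * ∫ t in Ioi u, |k t|) (Ioi a)) :
    ∫ t in Ioi a, (∫ u in a..t, ψ u) * k t = ∫ u in Ioi a, ψ u * ∫ t in Ioi u, k t := by
  have hswap := integral_integral_swap (f := fun t u => triangleKernel a ψ k (t, u))
    (integrable_triangleKernel a hψ hk hdom)
  simpa only [integral_triangleKernel_snd, integral_triangleKernel_fst,
    integral_indicator measurableSet_Ioi] using hswap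

end Triangle

theorem integrableOn_abs_mul_integral_Ioi_abs_mul {a M : ℝ} {ψ h f : ℝ → ℝ}
    (hψ : AEStronglyMeasurable ψ) (hh : AEStronglyMeasurable h) (hM : ∀ x, |h x| ≤ M)
    (hf : Integrable f) (hf_nonneg : ∀ x, 0 ≤ f x)
    (hdom : IntegrableOn (fun u => |ψ u| * ∫ t in Ioi u, f t) (Ioi a)) :
    IntegrableOn (fun u => |ψ u| * ∫ t in Ioi u, |h t * f t|) (Ioi a) := by
  have hhf : Integrable fun t => |h t * f t| :=
    (hf.bdd_mul hh (Filter.Eventually.of_forall fun x => (hM x).trans_eq' (Real.norm_eq_abs _))).abs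
  have htail_anti : Antitone fun u => ∫ t in Ioi u, |h t * f t| := fun u v huv =>
    setIntegral_mono_set hhf.integrableOn (Filter.Eventually.of_forall fun _ => abs_nonneg _)
      (Ioi_subset_Ioi huv).eventuallyLE
  have htail_le (u : ℝ) : ∫ t in Ioi u, |h t * f t| ≤ M * ∫ t in Ioi u, f t := by
    rw [← integral_const_mul]
    refine setIntegral_mono hhf.integrableOn (hf.const_mul M).integrableOn fun t => ?_
    rw [abs_mul, abs_of_nonneg (hf_nonneg t)]
    exact mul_le_mul_of_nonneg_right (hM t) (hf_nonneg t)
  refine (hdom.const_mul M).mono'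
    ((hψ.norm.mul htail_anti.measurable.aestronglyMeasurable).restrict) ?_
  refine Filter.Eventually.of_forall fun u => ?_
  rw [Real.norm_eq_abs, abs_of_nonneg (mul_nonneg (abs_nonneg _) (integral_nonneg fun _ => abs_nonneg _))]
  calc |ψ u| * ∫ t in Ioi u, |h t * f t| ≤ |ψ u| * (M * ∫ t in Ioi u, f t) :=
        mul_le_mul_of_nonneg_left (htail_le u) (abs_nonneg _)
    _ = M * (|ψ u| * ∫ t in Ioi u, f t) := by ring

theorem exp_neg_integral_div_exp_neg_integral {l l' : ℝ → ℝ} {a b : ℝ}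
    (hl : IntervalIntegrable l volume a b) (hl' : IntervalIntegrable l' volume a b) :
    Real.exp (-∫ u in a..b, l u) / Real.exp (-∫ u in a..b, l' u) =
      Real.exp (∫ u in a..b, (l' u - l u)) := by
  rw [← Real.exp_sub, intervalIntegral.integral_sub hl' hl]
  ring_nf

theorem exp_integral_sub_one {g : ℝ → ℝ} (hg : Continuous g) (a b : ℝ) :
    Real.exp (∫ u in a..b, g u) - 1 = ∫ u in a..b, g u * Real.exp (∫ v in a..u, g v) := by
  have hderiv (u : ℝ) :
      HasDerivAt (fun s => Real.exp (∫ v in a..s, g v)) (g u * Real.exp (∫ v in a..u, g v)) u := by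
    simpa [mul_comm] using (hg.integral_hasStrictDerivAt a u).hasDerivAt.exp
  have hcont : Continuous fun u => g u * Real.exp (∫ v in a..u, g v) :=
    hg.mul (intervalIntegral.continuous_primitive (fun _ _ => hg.intervalIntegrable _ _) a).rexp
  rw [intervalIntegral.integral_eq_sub_of_hasDerivAt (fun u _ => hderiv u)
    (hcont.intervalIntegrable a b), intervalIntegral.integral_same, Real.exp_zero]

theorem stmt_9_general
    (lamR lamRh : ℝ → ℝ) (hlamR : Continuous lamR) (hlamRh : Continuous lamRh)
    (Γ Γh : ℝ → ℝ)
    (hΓ : ∀ t, Γ t = Real.exp (-∫ u in (0 : ℝ)..t, lamR u))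
    (hΓh : ∀ t, Γh t = Real.exp (-∫ u in (0 : ℝ)..t, lamRh u))
    (f : ℝ → ℝ) (hf_nonneg : ∀ x, 0 ≤ f x) (hf_int : Integrable f)
    (hhat : ℝ → ℝ) (hhat_meas : Measurable hhat) (hhat_bdd : ∃ M, ∀ x, |hhat x| ≤ M)
    (h_int : IntegrableOn
      (fun u => Γ u / Γh u * |lamR u - lamRh u| * ∫ t in Set.Ioi u, f t)
      (Set.Ioi (0 : ℝ))) :
    (∫ t in Set.Ioi (0 : ℝ), (Γ t / Γh t - 1) * hhat t * f t)
      = -∫ u in Set.Ioi (0 : ℝ),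
          Γ u / Γh u * (lamR u - lamRh u) * ∫ t in Set.Ioi u, hhat t * f t := by
  obtain ⟨M, hM⟩ := hhat_bdd
  set g := fun u => lamRh u - lamR u
  have hg : Continuous g := hlamRh.sub hlamR
  have hρ (t : ℝ) : Γ t / Γh t = Real.exp (∫ u in (0 : ℝ)..t, g u) := by
    rw [hΓ, hΓh]
    exact exp_neg_integral_div_exp_neg_integral (hlamR.intervalIntegrable _ _)
      (hlamRh.intervalIntegrable _ _)
  have hψ : Continuous fun u => g u * (Γ u / Γh u) := by
    simp_rw [hρ]
    exact hg.mul (intervalIntegral.continuous_primitive (fun _ _ => hg.intervalIntegrable _ _) 0).rexp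
  have hdom : IntegrableOn (fun u => |g u * (Γ u / Γh u)| * ∫ t in Ioi u, f t) (Ioi 0) := by
    refine h_int.congr_fun (fun u _ => ?_) measurableSet_Ioi
    have hρ_pos : 0 < Γ u / Γh u := hρ u ▸ Real.exp_pos _
    rw [abs_mul, abs_of_pos hρ_pos, show |g u| = |lamR u - lamRh u| from abs_sub_comm _ _]
    ring
  calc (∫ t in Ioi (0 : ℝ), (Γ t / Γh t - 1) * hhat t * f t)
      = ∫ t in Ioi (0 : ℝ), (∫ u in (0 : ℝ)..t, g u * (Γ u / Γh u)) * (hhat t * f t) := by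
        simp_rw [hρ, exp_integral_sub_one hg, mul_assoc]
    _ = ∫ u in Ioi (0 : ℝ), g u * (Γ u / Γh u) * ∫ t in Ioi u, hhat t * f t :=
        setIntegral_Ioi_intervalIntegral_mul 0 hψ.aestronglyMeasurable
          (hf_int.bdd_mul hhat_meas.aestronglyMeasurable (Filter.Eventually.of_forall hM))
          (integrableOn_abs_mul_integral_Ioi_abs_mul hψ.aestronglyMeasurable
            hhat_meas.aestronglyMeasurable hM hf_int hf_nonneg hdom)
    _ = _ := by
        rw [← integral_neg]
        congr with u
        ring

/-- With `Γ(t) = exp(−∫_0^t λ_R)` and `Γ̂(t) = exp(−∫_0^t λ̂_R)` for continuous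
`λ_R, λ̂_R`, `f` nonnegative, integrable, vanishing on `(−∞,0)`, `ĥ` bounded measurable, and
`u ↦ (Γ(u)/Γ̂(u))·|λ_R(u) − λ̂_R(u)|·(∫_u^∞ f)` integrable on `(0,∞)`:
`∫_0^∞ (Γ(t)/Γ̂(t) − 1)·ĥ(t)·f(t) dt
  = −∫_0^∞ (Γ(u)/Γ̂(u))·(λ_R(u) − λ̂_R(u))·(∫_u^∞ ĥ(t) f(t) dt) du`. -/
theorem stmt_9
    (lamR lamRh : ℝ → ℝ) (hlamR : Continuous lamR) (hlamRh : Continuous lamRh)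
    (Γ Γh : ℝ → ℝ)
    (hΓ : ∀ t, Γ t = Real.exp (-∫ u in (0 : ℝ)..t, lamR u))
    (hΓh : ∀ t, Γh t = Real.exp (-∫ u in (0 : ℝ)..t, lamRh u))
    (f : ℝ → ℝ) (hf_nonneg : ∀ x, 0 ≤ f x) (hf_int : Integrable f)
    (hf_zero : ∀ x < (0 : ℝ), f x = 0)
    (hhat : ℝ → ℝ) (hhat_meas : Measurable hhat) (hhat_bdd : ∃ M, ∀ x, |hhat x| ≤ M)
    (h_int : IntegrableOn
      (fun u => Γ u / Γh u * |lamR u - lamRh u| * ∫ t in Set.Ioi u, f t)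
      (Set.Ioi (0 : ℝ))) :
    (∫ t in Set.Ioi (0 : ℝ), (Γ t / Γh t - 1) * hhat t * f t)
      = -∫ u in Set.Ioi (0 : ℝ),
          Γ u / Γh u * (lamR u - lamRh u) * ∫ t in Set.Ioi u, hhat t * f t :=
  stmt_9_general lamR lamRh hlamR hlamRh Γ Γh hΓ hΓh f hf_nonneg hf_int hhat hhat_meas hhat_bdd
    h_int
end

section
/- Let (Ω, 𝓕, P) be a probability space, let T, R : Ω → ℝ be independent random variables, let h : ℝ → ℝ be bounded and measurable, and define Γ(t) = P(R ≥ t). Assume Γ(T(ω)) > 0 for P-almost every ω and that ω ↦ 1{T(ω) ≤ R(ω)}·h(T(ω))/Γ(T(ω)) is P-integrable. Then for every u ∈ ℝ: E[ 1{T ≤ R}·1{u ≤ T}·1{u ≤ R}·h(T)/Γ(T) ] = E[ h(T)·1{u ≤ T} ]. -/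
open MeasureTheory ProbabilityTheory

/-!
Proof idea: by independence the law of `(T, R)` is a product, so integrating out `R` first turns
`1{T ≤ R}` into `P(R ≥ T) = Γ(T)`, which cancels the weight `1 / Γ(T)` wherever `Γ(T) > 0`, that
is almost surely. This gives `E[1{T ≤ R} g(T) / Γ(T)] = E[g(T)]` for every measurable `g`; for
`g = h · 1{u ≤ ·}` the extra factor `1{u ≤ R}` is redundant on
`{T ≤ R, u ≤ T}`.
-/

namespace IPCW

variable {Ω : Type*} [MeasurableSpace Ω] {P : Measure Ω} {T R : Ω → ℝ}

theorem antitone_measure_setOf_le_toReal [IsFiniteMeasure P] (R : Ω → ℝ) :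
    Antitone fun t => (P {ω | t ≤ R ω}).toReal :=
  fun _ _ hst => ENNReal.toReal_mono (measure_ne_top _ _)
    (measure_mono fun _ hω => hst.trans hω)

theorem integral_ite_le_map (hR : Measurable R) (x : ℝ) :
    ∫ y, (if x ≤ y then (1 : ℝ) else 0) ∂(P.map R) = (P {ω | x ≤ R ω}).toReal := by
  have hind : (fun y : ℝ => if x ≤ y then (1 : ℝ) else 0) = (Set.Ici x).indicator 1 := by
    funext y
    simp [Set.indicator_apply]
  rw [hind, integral_indicator_one measurableSet_Ici, measureReal_def,
    Measure.map_apply hR measurableSet_Ici]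
  rfl

theorem IndepFun.integral_comp_eq_integral_integral [IsFiniteMeasure P] (hT : Measurable T) (hR : Measurable R)
    (hindep : IndepFun T R P) {F : ℝ × ℝ → ℝ} (hF : Measurable F)
    (hFint : Integrable (fun ω => F (T ω, R ω)) P) :
    ∫ ω, F (T ω, R ω) ∂P = ∫ x, ∫ y, F (x, y) ∂(P.map R) ∂(P.map T) := by
  have hTR : AEMeasurable (fun ω => (T ω, R ω)) P := (hT.prodMk hR).aemeasurable
  have hprod := hindep.map_prod_eq_prod_map_map hT.aemeasurable hR.aemeasurable
  have hFint' : Integrable F ((P.map T).prod (P.map R)) := by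
    rw [← hprod]
    exact (integrable_map_measure hF.aestronglyMeasurable hTR).mpr hFint
  rw [← integral_prod F hFint', ← hprod, integral_map hTR hF.aestronglyMeasurable]

theorem integral_ite_le_mul_div_eq [IsFiniteMeasure P] (hT : Measurable T) (hR : Measurable R)
    (hindep : IndepFun T R P) {g : ℝ → ℝ} (hg : Measurable g)
    {Γ : ℝ → ℝ} (hΓ : ∀ t, Γ t = (P {ω | t ≤ R ω}).toReal) (hΓpos : ∀ᵐ ω ∂P, 0 < Γ (T ω))
    (hint : Integrable (fun ω => (if T ω ≤ R ω then (1 : ℝ) else 0) * g (T ω) / Γ (T ω)) P) :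
    ∫ ω, (if T ω ≤ R ω then (1 : ℝ) else 0) * g (T ω) / Γ (T ω) ∂P = ∫ ω, g (T ω) ∂P := by
  have hΓ_meas : Measurable Γ := by
    rw [funext hΓ]
    exact (antitone_measure_setOf_le_toReal R).measurable
  have hF : Measurable fun p : ℝ × ℝ => (if p.1 ≤ p.2 then (1 : ℝ) else 0) * g p.1 / Γ p.1 :=
    ((Measurable.ite (measurableSet_le measurable_fst measurable_snd) measurable_const
      measurable_const).mul (hg.comp measurable_fst)).div (hΓ_meas.comp measurable_fst)
  have hinner (x : ℝ) :
      ∫ y, (if x ≤ y then (1 : ℝ) else 0) * g x / Γ x ∂(P.map R) = g x / Γ x * Γ x := by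
    simp_rw [mul_comm (ite _ _ _) (g x), mul_div_right_comm _ (ite _ _ _)]
    rw [integral_const_mul, integral_ite_le_map hR, hΓ]
  have hcancel : (fun x => g x / Γ x * Γ x) =ᵐ[P.map T] g := by
    filter_upwards [(ae_map_iff hT.aemeasurable (hΓ_meas measurableSet_Ioi)).mpr hΓpos]
      with x hx
    exact div_mul_cancel₀ (g x) (ne_of_gt hx)
  rw [IndepFun.integral_comp_eq_integral_integral hT hR hindep hF hint]
  simp_rw [hinner]
  rw [integral_congr_ae hcancel, integral_map hT.aemeasurable hg.aestronglyMeasurable]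

end IPCW

theorem stmt_11_general
    {Ω : Type*} [MeasurableSpace Ω] (P : Measure Ω) [IsProbabilityMeasure P]
    (T R : Ω → ℝ) (hT : Measurable T) (hR : Measurable R)
    (hindep : IndepFun T R P)
    (h : ℝ → ℝ) (hh_meas : Measurable h)
    (Γ : ℝ → ℝ) (hΓ : ∀ t, Γ t = (P {ω | t ≤ R ω}).toReal)
    (hΓpos : ∀ᵐ ω ∂P, 0 < Γ (T ω))
    (hw_int : Integrable
      (fun ω => (if T ω ≤ R ω then (1 : ℝ) else 0) * h (T ω) / Γ (T ω)) P) :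
    ∀ u : ℝ,
      (∫ ω, (if T ω ≤ R ω then (1 : ℝ) else 0) * (if u ≤ T ω then (1 : ℝ) else 0)
          * (if u ≤ R ω then (1 : ℝ) else 0) * h (T ω) / Γ (T ω) ∂P)
        = ∫ ω, h (T ω) * (if u ≤ T ω then (1 : ℝ) else 0) ∂P := by
  intro u
  set g : ℝ → ℝ := fun t => h t * (if u ≤ t then (1 : ℝ) else 0)
  have hg : Measurable g :=
    hh_meas.mul (Measurable.ite measurableSet_Ici measurable_const measurable_const)
  have hdrop_R (ω : Ω) :
      (if T ω ≤ R ω then (1 : ℝ) else 0) * (if u ≤ T ω then (1 : ℝ) else 0)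
          * (if u ≤ R ω then (1 : ℝ) else 0) * h (T ω) / Γ (T ω)
        = (if T ω ≤ R ω then (1 : ℝ) else 0) * g (T ω) / Γ (T ω) := by
    by_cases hTR : T ω ≤ R ω
    · by_cases huT : u ≤ T ω
      · simp [g, hTR, huT, huT.trans hTR]
      · simp [g, huT]
    · simp [hTR]
  have hint : Integrable (fun ω => (if T ω ≤ R ω then (1 : ℝ) else 0) * g (T ω) / Γ (T ω)) P := by
    refine (hw_int.indicator (s := {ω | u ≤ T ω}) (measurableSet_le measurable_const hT)).congr
      (Filter.Eventually.of_forall fun ω => ?_)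
    by_cases huT : u ≤ T ω <;> simp [g, huT]
  simp_rw [hdrop_R]
  exact IPCW.integral_ite_le_mul_div_eq hT hR hindep hg hΓ hΓpos hint

/-- IPCW unbiasedness identity. For independent real random variables `T, R`
on a probability space `(Ω, 𝓕, P)`, bounded measurable `h : ℝ → ℝ`, `Γ(t) = P(R ≥ t)`,
with `Γ(T) > 0` a.s. and `1{T ≤ R}·h(T)/Γ(T)` integrable, for every `u ∈ ℝ`:
`E[1{T ≤ R}·1{u ≤ T}·1{u ≤ R}·h(T)/Γ(T)] = E[h(T)·1{u ≤ T}]`. -/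
theorem stmt_11
    {Ω : Type*} [MeasurableSpace Ω] (P : Measure Ω) [IsProbabilityMeasure P]
    (T R : Ω → ℝ) (hT : Measurable T) (hR : Measurable R)
    (hindep : IndepFun T R P)
    (h : ℝ → ℝ) (hh_meas : Measurable h) (hh_bdd : ∃ M, ∀ x, |h x| ≤ M)
    (Γ : ℝ → ℝ) (hΓ : ∀ t, Γ t = (P {ω | t ≤ R ω}).toReal)
    (hΓpos : ∀ᵐ ω ∂P, 0 < Γ (T ω))
    (hw_int : Integrable
      (fun ω => (if T ω ≤ R ω then (1 : ℝ) else 0) * h (T ω) / Γ (T ω)) P) :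
    ∀ u : ℝ,
      (∫ ω, (if T ω ≤ R ω then (1 : ℝ) else 0) * (if u ≤ T ω then (1 : ℝ) else 0)
          * (if u ≤ R ω then (1 : ℝ) else 0) * h (T ω) / Γ (T ω) ∂P)
        = ∫ ω, h (T ω) * (if u ≤ T ω then (1 : ℝ) else 0) ∂P :=
  stmt_11_general P T R hT hR hindep h hh_meas Γ hΓ hΓpos hw_int
end

section
/- Let (Ω, 𝓕, P) be a probability space, let T, R : Ω → ℝ be independent random variables, let h : ℝ → ℝ be bounded and measurable, define Γ(t) = P(R ≥ t), and fix u ∈ ℝ with P(T ≥ u) > 0 and Γ(u) > 0. Assume Γ(T(ω)) > 0 for P-almost every ω and that ω ↦ 1{T(ω) ≤ R(ω)}·h(T(ω))/Γ(T(ω)) is P-integrable. Then P(T ≥ u and R ≥ u) = P(T ≥ u)·Γ(u), and consequently E[ 1{T ≤ R}·1{u ≤ T}·1{u ≤ R}·h(T)/Γ(T) ] / P(T ≥ u and R ≥ u) = ( E[ h(T)·1{u ≤ T} ] / P(T ≥ u) ) / Γ(u). -/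
/-!
Since `R` is independent of `T`, integrating `1{T ≤ R}` over `R` with `T = t` frozen gives
`P(R ≥ t) = Γ(t)`, which cancels the weight `1/Γ(T)` wherever `Γ(T) > 0`, that is almost surely.
On `{T ≤ R}` the event `u ≤ T` already implies `u ≤ R`, and independence factorises
`P(T ≥ u, R ≥ u)`.
-/

open MeasureTheory ProbabilityTheory

lemma ite_le_mul_ite_le_mul_ite_le {α : Type*} [LinearOrder α] (a b u : α) :
    (if a ≤ b then (1 : ℝ) else 0) * (if u ≤ a then 1 else 0) * (if u ≤ b then 1 else 0)
      = (if a ≤ b then 1 else 0) * (if u ≤ a then 1 else 0) := by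
  by_cases hab : a ≤ b
  · by_cases hua : u ≤ a
    · simp [hab, hua, hua.trans hab]
    · simp [hua]
  · simp [hab]

namespace ProbabilityTheory

variable {Ω α β E : Type*} [MeasurableSpace Ω] [NormedAddCommGroup E] [NormedSpace ℝ E]
  {P : Measure Ω} [IsFiniteMeasure P]

lemma IndepFun.integral_comp_prodMk_eq_integral_integral [MeasurableSpace α] [MeasurableSpace β]
    {X : Ω → α} {Y : Ω → β} (hXY : IndepFun X Y P) (hX : Measurable X) (hY : Measurable Y)
    {F : α × β → E} (hF : StronglyMeasurable F) (hint : Integrable (fun ω => F (X ω, Y ω)) P) :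
    ∫ ω, F (X ω, Y ω) ∂P = ∫ ω, ∫ ω', F (X ω, Y ω') ∂P ∂P := by
  have hmap : P.map (fun ω => (X ω, Y ω)) = (P.map X).prod (P.map Y) :=
    (indepFun_iff_map_prod_eq_prod_map_map hX.aemeasurable hY.aemeasurable).mp hXY
  have hXY_meas : AEMeasurable (fun ω => (X ω, Y ω)) P := (hX.prodMk hY).aemeasurable
  have hint_prod : Integrable F ((P.map X).prod (P.map Y)) := by
    rwa [← hmap, integrable_map_measure hF.aestronglyMeasurable hXY_meas]
  calc ∫ ω, F (X ω, Y ω) ∂P = ∫ p, F p ∂(P.map X).prod (P.map Y) := by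
        rw [← hmap, integral_map hXY_meas hF.aestronglyMeasurable]
    _ = ∫ x, ∫ y, F (x, y) ∂P.map Y ∂P.map X := integral_prod F hint_prod
    _ = ∫ ω, ∫ ω', F (X ω, Y ω') ∂P ∂P := by
        rw [integral_map hX.aemeasurable hint_prod.integral_prod_left.aestronglyMeasurable]
        congr with x
        exact integral_map hY.aemeasurable
          (hF.comp_measurable measurable_prodMk_left).aestronglyMeasurable

lemma IndepFun.integral_ite_le_mul_comp {X Y : Ω → ℝ} (hXY : IndepFun X Y P)
    (hX : Measurable X) (hY : Measurable Y) {g : ℝ → ℝ} (hg : Measurable g)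
    (hint : Integrable (fun ω => (if X ω ≤ Y ω then (1 : ℝ) else 0) * g (X ω)) P) :
    ∫ ω, (if X ω ≤ Y ω then (1 : ℝ) else 0) * g (X ω) ∂P
      = ∫ ω, g (X ω) * P.real {ω' | X ω ≤ Y ω'} ∂P := by
  have hF : StronglyMeasurable fun p : ℝ × ℝ => (if p.1 ≤ p.2 then (1 : ℝ) else 0) * g p.1 :=
    ((Measurable.ite (measurableSet_le measurable_fst measurable_snd) measurable_const
      measurable_const).mul (hg.comp measurable_fst)).stronglyMeasurable
  rw [hXY.integral_comp_prodMk_eq_integral_integral hX hY hF hint]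
  congr with ω
  dsimp only
  have hind : (fun ω' => if X ω ≤ Y ω' then (1 : ℝ) else 0) = {ω' | X ω ≤ Y ω'}.indicator 1 := by
    ext ω'; simp [Set.indicator_apply]
  rw [integral_mul_const, hind, integral_indicator_one (measurableSet_le measurable_const hY),
    mul_comm]

lemma antitone_measureReal_setOf_le [Preorder α] (R : Ω → α) :
    Antitone fun t => P.real {ω | t ≤ R ω} :=
  fun _ _ hst => measureReal_mono fun _ hω => hst.trans hω

end ProbabilityTheory

theorem stmt_12_general
    {Ω : Type*} [MeasurableSpace Ω] (P : Measure Ω) [IsProbabilityMeasure P]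
    (T R : Ω → ℝ) (hT : Measurable T) (hR : Measurable R)
    (hindep : IndepFun T R P)
    (h : ℝ → ℝ) (hh_meas : Measurable h)
    (Γ : ℝ → ℝ) (hΓ : ∀ t, Γ t = (P {ω | t ≤ R ω}).toReal)
    (u : ℝ)
    (hΓpos : ∀ᵐ ω ∂P, 0 < Γ (T ω))
    (hw_int : Integrable
      (fun ω => (if T ω ≤ R ω then (1 : ℝ) else 0) * h (T ω) / Γ (T ω)) P) :
    (P {ω | u ≤ T ω ∧ u ≤ R ω}).toReal = (P {ω | u ≤ T ω}).toReal * Γ u ∧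
      (∫ ω, (if T ω ≤ R ω then (1 : ℝ) else 0) * (if u ≤ T ω then (1 : ℝ) else 0)
            * (if u ≤ R ω then (1 : ℝ) else 0) * h (T ω) / Γ (T ω) ∂P)
          / (P {ω | u ≤ T ω ∧ u ≤ R ω}).toReal
        = ((∫ ω, h (T ω) * (if u ≤ T ω then (1 : ℝ) else 0) ∂P)
            / (P {ω | u ≤ T ω}).toReal) / Γ u := by
  have hΓ_meas : Measurable Γ := by
    rw [funext hΓ]
    exact (antitone_measureReal_setOf_le R).measurable
  have hjoint : (P {ω | u ≤ T ω ∧ u ≤ R ω}).toReal = (P {ω | u ≤ T ω}).toReal * Γ u := by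
    rw [hΓ, ← ENNReal.toReal_mul]
    exact congrArg ENNReal.toReal (hindep.measure_inter_preimage_eq_mul _ _
      measurableSet_Ici measurableSet_Ici)
  refine ⟨hjoint, ?_⟩
  simp_rw [ite_le_mul_ite_le_mul_ite_le, mul_assoc, mul_div_assoc]
  set g : ℝ → ℝ := fun t => (if u ≤ t then (1 : ℝ) else 0) * (h t / Γ t)
  have hg : Measurable g := ((Measurable.ite measurableSet_Ici measurable_const
    measurable_const).mul (hh_meas.div hΓ_meas))
  have hint : Integrable (fun ω => (if T ω ≤ R ω then (1 : ℝ) else 0) * g (T ω)) P := by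
    refine (hw_int.indicator (hT (measurableSet_Ici (a := u)))).congr
      (ae_of_all _ fun ω => ?_)
    by_cases huT : u ≤ T ω <;> simp [g, Set.indicator, huT, ite_div]
  rw [hindep.integral_ite_le_mul_comp hT hR hg hint, hjoint, div_div]
  congr 1
  refine integral_congr_ae ?_
  filter_upwards [hΓpos] with ω hω
  rw [measureReal_def, ← hΓ, mul_assoc, div_mul_cancel₀ _ hω.ne', mul_comm]

/-- Conditional-expectation computation for the IPCW transform. For
independent real random variables `T, R` on `(Ω, 𝓕, P)`, bounded measurable `h`,
`Γ(t) = P(R ≥ t)`, `u` with `P(T ≥ u) > 0` and `Γ(u) > 0`, `Γ(T) > 0` a.s., and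
`1{T ≤ R}·h(T)/Γ(T)` integrable: `P(T ≥ u, R ≥ u) = P(T ≥ u)·Γ(u)`, and
`E[1{T ≤ R}·1{u ≤ T}·1{u ≤ R}·h(T)/Γ(T)] / P(T ≥ u, R ≥ u)
  = (E[h(T)·1{u ≤ T}] / P(T ≥ u)) / Γ(u)`. -/
theorem stmt_12
    {Ω : Type*} [MeasurableSpace Ω] (P : Measure Ω) [IsProbabilityMeasure P]
    (T R : Ω → ℝ) (hT : Measurable T) (hR : Measurable R)
    (hindep : IndepFun T R P)
    (h : ℝ → ℝ) (hh_meas : Measurable h) (hh_bdd : ∃ M, ∀ x, |h x| ≤ M)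
    (Γ : ℝ → ℝ) (hΓ : ∀ t, Γ t = (P {ω | t ≤ R ω}).toReal)
    (u : ℝ) (hTu : 0 < (P {ω | u ≤ T ω}).toReal) (hΓu : 0 < Γ u)
    (hΓpos : ∀ᵐ ω ∂P, 0 < Γ (T ω))
    (hw_int : Integrable
      (fun ω => (if T ω ≤ R ω then (1 : ℝ) else 0) * h (T ω) / Γ (T ω)) P) :
    (P {ω | u ≤ T ω ∧ u ≤ R ω}).toReal = (P {ω | u ≤ T ω}).toReal * Γ u ∧
      (∫ ω, (if T ω ≤ R ω then (1 : ℝ) else 0) * (if u ≤ T ω then (1 : ℝ) else 0)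
            * (if u ≤ R ω then (1 : ℝ) else 0) * h (T ω) / Γ (T ω) ∂P)
          / (P {ω | u ≤ T ω ∧ u ≤ R ω}).toReal
        = ((∫ ω, h (T ω) * (if u ≤ T ω then (1 : ℝ) else 0) ∂P)
            / (P {ω | u ≤ T ω}).toReal) / Γ u :=
  stmt_12_general P T R hT hR hindep h hh_meas Γ hΓ u hΓpos hw_int
end
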